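/- Let f : ℝ^{m×n} → ℝ be convex and differentiable with gradient ∇f and L-smooth, let h : ℝ^{m×n} → ℝ be convex, and set F = f + h. Let U ∈ ℝ^{m×m} be symmetric, let x*, λ* ∈ ℝ^{m×n} with Ux* = 0, and let θ ∈ [0,1]. For x, x⁺, y ∈ ℝ^{m×n}, define x̃ = (1 − θ)x + θx*, ρ = F(x) − F(x*) + ⟨λ*, Ux⟩, and ρ⁺ = F(x⁺) − F(x*) + ⟨λ*, Ux⁺⟩. Then ρ⁺ − (1 − θ)ρ ≤ ⟨∇f(y), x⁺ − x̃⟩ + (L/2)‖x⁺ − y‖²_F + h(x⁺) − h(x̃) + ⟨λ*, U(x⁺ − x̃)⟩. -/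

import Mathlib

open scoped RealInnerProductSpace

/-!
Write `F = f + h` and `g z = ⟪lam, U z⟫`. Since `U xs = 0`, `g` is linear with
`g x̃ = (1 - θ) g x`, so `ρ⁺ - (1 - θ) ρ = F x⁺ - (1 - θ) F x - θ F xs + g (x⁺ - x̃)`.
Convexity of `F` bounds this by `F x⁺ - F x̃ + g (x⁺ - x̃)`, and `f x⁺ - f x̃` is bounded
by expanding `f` around `y`: the smoothness upper bound at `x⁺` minus the convexity lower
bound at `x̃`.
-/

/-- Left multiplication of `x ∈ ℝ^{m×n}` by an `m × m` matrix `A`,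
with `ℝ^{m×n}` viewed as a Euclidean space with the Frobenius inner product. -/
noncomputable def matApply {m n : ℕ} (A : Matrix (Fin m) (Fin m) ℝ)
    (x : EuclideanSpace ℝ (Fin m × Fin n)) : EuclideanSpace ℝ (Fin m × Fin n) :=
  WithLp.toLp 2 (fun p : Fin m × Fin n => ∑ k : Fin m, A p.1 k * x (k, p.2))

section matApply

variable {m n : ℕ} (A : Matrix (Fin m) (Fin m) ℝ)

lemma matApply_add (a b : EuclideanSpace ℝ (Fin m × Fin n)) :
    matApply A (a + b) = matApply A a + matApply A b := by
  ext p
  simp [matApply, mul_add, Finset.sum_add_distrib]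

lemma matApply_smul (c : ℝ) (a : EuclideanSpace ℝ (Fin m × Fin n)) :
    matApply A (c • a) = c • matApply A a := by
  ext p
  simp only [matApply, PiLp.smul_apply, smul_eq_mul, Finset.mul_sum]
  exact Finset.sum_congr rfl fun k _ => mul_left_comm _ _ _

lemma matApply_sub (a b : EuclideanSpace ℝ (Fin m × Fin n)) :
    matApply A (a - b) = matApply A a - matApply A b := by
  ext p
  simp [matApply, mul_sub, Finset.sum_sub_distrib]

end matApply

section gradient

variable {E : Type*} [NormedAddCommGroup E] [InnerProductSpace ℝ E] {f : E → ℝ} {g : E → E}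

theorem convexOn_univ_of_add_inner_le (hf : ∀ a b, f a + ⟪g a, b - a⟫ ≤ f b) :
    ConvexOn ℝ Set.univ f := by
  refine ⟨convex_univ, fun x _ y _ a b ha hb hab => ?_⟩
  set z := a • x + b • y
  have hx := mul_le_mul_of_nonneg_left (hf z x) ha
  have hy := mul_le_mul_of_nonneg_left (hf z y) hb
  -- the first-order terms cancel because `z` is the `(a, b)`-barycentre of `x` and `y`
  have hcancel : a * ⟪g z, x - z⟫ + b * ⟪g z, y - z⟫ = 0 := by
    rw [← real_inner_smul_right, ← real_inner_smul_right, ← inner_add_right]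
    obtain rfl : b = 1 - a := by linarith
    convert inner_zero_right (g z) using 2
    module
  have hz : f z = a * f z + b * f z := by rw [← add_mul, hab, one_mul]
  simp only [smul_eq_mul]
  linarith

theorem sub_le_inner_add_sq_norm_of_smooth {L : ℝ} (hf : ∀ a b, f a + ⟪g a, b - a⟫ ≤ f b)
    (hsmooth : ∀ a b, f b ≤ f a + ⟪g a, b - a⟫ + (L / 2) * ‖b - a‖ ^ 2) (y a b : E) :
    f b - f a ≤ ⟪g y, b - a⟫ + (L / 2) * ‖b - y‖ ^ 2 := by
  have hsplit : ⟪g y, b - y⟫ - ⟪g y, a - y⟫ = ⟪g y, b - a⟫ := by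
    rw [← inner_sub_right, sub_sub_sub_cancel_right]
  linarith [hsmooth y b, hf y a]

end gradient

theorem stmt15_general (m n : ℕ) (L : ℝ)
    (f h : EuclideanSpace ℝ (Fin m × Fin n) → ℝ)
    (gf : EuclideanSpace ℝ (Fin m × Fin n) → EuclideanSpace ℝ (Fin m × Fin n))
    -- `f` is convex with gradient `gf`
    (hconv : ∀ a b, f a + ⟪gf a, b - a⟫ ≤ f b)
    -- `f` is `L`-smooth with gradient `gf`
    (hsmooth : ∀ a b, f b ≤ f a + ⟪gf a, b - a⟫ + (L / 2) * ‖b - a‖ ^ 2)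
    (hh : ConvexOn ℝ Set.univ h)
    (U : Matrix (Fin m) (Fin m) ℝ)
    (xs lam : EuclideanSpace ℝ (Fin m × Fin n)) (hxs : matApply U xs = 0)
    (θ : ℝ) (hθ0 : 0 ≤ θ) (hθ1 : θ ≤ 1)
    (x xp y xtilde : EuclideanSpace ℝ (Fin m × Fin n))
    (hxt : xtilde = (1 - θ) • x + θ • xs)
    (ρ ρp : ℝ)
    (hρ : ρ = (f x + h x) - (f xs + h xs) + ⟪lam, matApply U x⟫)
    (hρp : ρp = (f xp + h xp) - (f xs + h xs) + ⟪lam, matApply U xp⟫) :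
    ρp - (1 - θ) * ρ ≤ ⟪gf y, xp - xtilde⟫ + (L / 2) * ‖xp - y‖ ^ 2
      + h xp - h xtilde + ⟪lam, matApply U (xp - xtilde)⟫ := by
  have hF : f xtilde + h xtilde ≤ (1 - θ) * (f x + h x) + θ * (f xs + h xs) := by
    have := ((convexOn_univ_of_add_inner_le hconv).add hh).2 (Set.mem_univ x)
      (Set.mem_univ xs) (sub_nonneg.2 hθ1) hθ0 (sub_add_cancel 1 θ)
    simpa only [← hxt, Pi.add_apply, smul_eq_mul] using this
  have hf := sub_le_inner_add_sq_norm_of_smooth hconv hsmooth y xtilde xp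
  have hU : ⟪lam, matApply U (xp - xtilde)⟫ =
      ⟪lam, matApply U xp⟫ - (1 - θ) * ⟪lam, matApply U x⟫ := by
    rw [matApply_sub, hxt, matApply_add, matApply_smul, matApply_smul, hxs, smul_zero,
      add_zero, inner_sub_right, real_inner_smul_right]
  rw [hρ, hρp, hU]
  linarith

theorem stmt15 (m n : ℕ) (L : ℝ)
    (f h : EuclideanSpace ℝ (Fin m × Fin n) → ℝ)
    (gf : EuclideanSpace ℝ (Fin m × Fin n) → EuclideanSpace ℝ (Fin m × Fin n))
    -- `f` is convex with gradient `gf`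
    (hconv : ∀ a b, f a + ⟪gf a, b - a⟫ ≤ f b)
    -- `f` is `L`-smooth with gradient `gf`
    (hsmooth : ∀ a b, f b ≤ f a + ⟪gf a, b - a⟫ + (L / 2) * ‖b - a‖ ^ 2)
    (hh : ConvexOn ℝ Set.univ h)
    (U : Matrix (Fin m) (Fin m) ℝ) (hU : U.IsSymm)
    (xs lam : EuclideanSpace ℝ (Fin m × Fin n)) (hxs : matApply U xs = 0)
    (θ : ℝ) (hθ0 : 0 ≤ θ) (hθ1 : θ ≤ 1)
    (x xp y xtilde : EuclideanSpace ℝ (Fin m × Fin n))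
    (hxt : xtilde = (1 - θ) • x + θ • xs)
    (ρ ρp : ℝ)
    (hρ : ρ = (f x + h x) - (f xs + h xs) + ⟪lam, matApply U x⟫)
    (hρp : ρp = (f xp + h xp) - (f xs + h xs) + ⟪lam, matApply U xp⟫) :
    ρp - (1 - θ) * ρ ≤ ⟪gf y, xp - xtilde⟫ + (L / 2) * ‖xp - y‖ ^ 2
      + h xp - h xtilde + ⟪lam, matApply U (xp - xtilde)⟫ :=
  stmt15_general m n L f h gf hconv hsmooth hh U xs lam hxs θ hθ0 hθ1 x xp y xtilde hxt ρ ρp hρ hρp
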